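/- Let C be a partition of I_l into nonempty label-pure clusters with common labels ŷ_k and centroids x̄_{C_k}, and D a partition of I_u into nonempty clusters with centroids x̄_{D_k}. Define the aggregated S³VM objective H(w, b, d) = (1/2)‖w‖² + M_l * Σ_k |C_k| * max(0, 1 − ŷ_k * (⟪w, x̄_{C_k}⟫ + b)) + M_u * Σ_k |D_k| * max(0, 1 − d_k * (⟪w, x̄_{D_k}⟫ + b)) over w, b and cluster labels d_k ∈ {−1, 1}. If (w̄, b̄, d̄) minimizes H and for some unlabeled cluster D_k the value max(0, 1 − d̄_k * (⟪w̄, x̄_{D_k}⟫ + b̄)) is positive, then d̄_k * (⟪w̄, x̄_{D_k}⟫ + b̄) ≥ 0. -/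
import Mathlib


open Finset
open scoped RealInnerProductSpace

noncomputable section

/-- The cluster of index `k` within the index set `S`. -/
def clusterIn {n K : ℕ} (S : Finset (Fin n)) (c : Fin n → Fin K) (k : Fin K) :
    Finset (Fin n) :=
  S.filter fun i => c i = k

/-- Centroid of a finite set of data points. -/
def centroidOf {n m : ℕ} (x : Fin n → EuclideanSpace ℝ (Fin m))
    (S : Finset (Fin n)) : EuclideanSpace ℝ (Fin m) :=
  (S.card : ℝ)⁻¹ • ∑ i ∈ S, x i

/-- The weighted aggregated S³VM objective for a label-pure partition
(assignment `cl`, common labels `yhat`) of the labeled entries `Il` and a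
partition (assignment `cu`) of the unlabeled entries `Ilᶜ`, with cluster
labels `d`. -/
def s3H {n m Kl Ku : ℕ} (x : Fin n → EuclideanSpace ℝ (Fin m))
    (Il : Finset (Fin n)) (Ml Mu : ℝ)
    (cl : Fin n → Fin Kl) (yhat : Fin Kl → ℝ) (cu : Fin n → Fin Ku)
    (w : EuclideanSpace ℝ (Fin m)) (b : ℝ) (d : Fin Ku → ℝ) : ℝ :=
  (1 / 2) * ‖w‖ ^ 2
    + Ml * ∑ k, ((clusterIn Il cl k).card : ℝ) *
        max 0 (1 - yhat k * (⟪w, centroidOf x (clusterIn Il cl k)⟫ + b))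
    + Mu * ∑ k, ((clusterIn Ilᶜ cu k).card : ℝ) *
        max 0 (1 - d k * (⟪w, centroidOf x (clusterIn Ilᶜ cu k)⟫ + b))

/-- If `(w̄, b̄, d̄)` minimizes the aggregated S³VM objective and the hinge loss
of some unlabeled cluster is positive, then the label of that cluster agrees in
sign with the classifier value at its centroid. -/
theorem s3vm_aggregated_optimal_label_property (n m Kl Ku : ℕ)
    (x : Fin n → EuclideanSpace ℝ (Fin m)) (y : Fin n → ℝ)
    (Il : Finset (Fin n)) (hy : ∀ i ∈ Il, y i = 1 ∨ y i = -1)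
    (Ml Mu : ℝ) (hMl : 0 < Ml) (hMu : 0 < Mu)
    (cl : Fin n → Fin Kl) (hneL : ∀ k, (clusterIn Il cl k).Nonempty)
    (yhat : Fin Kl → ℝ) (hpure : ∀ i ∈ Il, yhat (cl i) = y i)
    (cu : Fin n → Fin Ku) (hneU : ∀ k, (clusterIn Ilᶜ cu k).Nonempty)
    (wbar : EuclideanSpace ℝ (Fin m)) (bbar : ℝ) (dbar : Fin Ku → ℝ)
    (hdbar : ∀ k, dbar k = 1 ∨ dbar k = -1)
    (hmin : ∀ (w : EuclideanSpace ℝ (Fin m)) (b : ℝ) (d : Fin Ku → ℝ),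
      (∀ k, d k = 1 ∨ d k = -1) →
      s3H x Il Ml Mu cl yhat cu wbar bbar dbar ≤ s3H x Il Ml Mu cl yhat cu w b d) :
    ∀ k, 0 < max 0 (1 - dbar k * (⟪wbar, centroidOf x (clusterIn Ilᶜ cu k)⟫ + bbar)) →
      0 ≤ dbar k * (⟪wbar, centroidOf x (clusterIn Ilᶜ cu k)⟫ + bbar) := by
  intro k hpos
  by_contra hneg
  push_neg at hneg
  set v := ⟪wbar, centroidOf x (clusterIn Ilᶜ cu k)⟫ + bbar with hv
  set d' : Fin Ku → ℝ := Function.update dbar k (-dbar k) with hd'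
  have hd'valid : ∀ j, d' j = 1 ∨ d' j = -1 := by
    intro j
    by_cases hj : j = k
    · subst hj
      simp only [hd', Function.update_self]
      rcases hdbar j with h | h <;> simp [h]
    · simp only [hd', Function.update_of_ne hj]
      exact hdbar j
  have hle := hmin wbar bbar d' hd'valid
  -- show strict decrease
  have hsum : ∑ j, ((clusterIn Ilᶜ cu j).card : ℝ) *
        max 0 (1 - d' j * (⟪wbar, centroidOf x (clusterIn Ilᶜ cu j)⟫ + bbar))
      < ∑ j, ((clusterIn Ilᶜ cu j).card : ℝ) *
        max 0 (1 - dbar j * (⟪wbar, centroidOf x (clusterIn Ilᶜ cu j)⟫ + bbar)) := by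
    apply Finset.sum_lt_sum
    · intro j _
      by_cases hj : j = k
      · subst hj
        have hcard : (0 : ℝ) < ((clusterIn Ilᶜ cu j).card : ℝ) := by
          exact_mod_cast Finset.card_pos.mpr (hneU j)
        apply le_of_lt
        apply mul_lt_mul_of_pos_left _ hcard
        simp only [hd', Function.update_self]
        have h1 : 1 - dbar j * v > 1 := by linarith
        have h2 : max 0 (1 - dbar j * v) = 1 - dbar j * v := by
          rw [max_eq_right] ; linarith
        rw [h2]
        have : 1 - -dbar j * v = 1 + dbar j * v := by ring
        rw [this]
        apply max_lt <;> linarith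
      · simp [hd', Function.update_of_ne hj]
    · refine ⟨k, Finset.mem_univ k, ?_⟩
      have hcard : (0 : ℝ) < ((clusterIn Ilᶜ cu k).card : ℝ) := by
        exact_mod_cast Finset.card_pos.mpr (hneU k)
      apply mul_lt_mul_of_pos_left _ hcard
      simp only [hd', Function.update_self]
      have h2 : max 0 (1 - dbar k * v) = 1 - dbar k * v := by
        rw [max_eq_right] ; linarith
      rw [h2]
      have : 1 - -dbar k * v = 1 + dbar k * v := by ring
      rw [this]
      apply max_lt <;> linarith
  have hlt : s3H x Il Ml Mu cl yhat cu wbar bbar d'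
      < s3H x Il Ml Mu cl yhat cu wbar bbar dbar := by
    unfold s3H
    have := mul_lt_mul_of_pos_left hsum hMu
    linarith
  linarith

end
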